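/- arXiv:1607.03005 — 2 statements merged into one kernel-verified Lean document; each statement's English description precedes it below -/
import Mathlib

section
/- Let g be a finite-dimensional real Lie algebra with an invariant inner product B_g, let h, l be subalgebras of g with g = h + l, let A = l^⊥ and C = (h ∩ l)^⊥ ∩ h. Let k be a Lie algebra and V ⊆ k a subspace, and suppose [·,·]_h : V × V → h is a bilinear map. Then the condition 'for all nonzero X ∈ A and all nonzero Y ∈ V there exists Z ∈ V with B_g(X, [Y,Z]_h) ≠ 0' holds if and only if the condition 'for all nonzero X ∈ C and all nonzero Y ∈ V there exists Z ∈ V with B_g(X, [Y,Z]_h) ≠ 0' holds. -/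
/-!
Since `br` takes values in `h`, both conditions see `X` only through `B X` restricted to `h`,
i.e. only modulo `hᗮ`. Modulo `hᗮ` the spaces `lᗮ` and `C` span the same subspace,
`(h ⊓ l)ᗮ = lᗮ + hᗮ = C + hᗮ`, and neither meets `hᗮ` (by `h + l = g`, resp. by definiteness
of `B` on `h`), so nonzero elements of one correspond to nonzero elements of the other.
-/

theorem Submodule.forall_ne_zero_of_le_sup {R M : Type*} [Ring R] [AddCommGroup M] [Module R M]
    {S T N : Submodule R M} (hTS : T ≤ S ⊔ N) (hTN : Disjoint T N) {P : M → Prop}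
    (hP : ∀ x, ∀ n ∈ N, P x → P (x + n)) (hS : ∀ x, x ≠ 0 → x ∈ S → P x) :
    ∀ x, x ≠ 0 → x ∈ T → P x := by
  intro x hx hxT
  obtain ⟨s, hs, n, hn, rfl⟩ := Submodule.mem_sup.mp (hTS hxT)
  have hs0 : s ≠ 0 := by
    rintro rfl
    rw [zero_add] at hxT hx
    exact hx (Submodule.disjoint_def.mp hTN n hxT hn)
  exact hP s n hn (hS s hs0 hs)

namespace LinearMap.BilinForm

section CommRing

variable {R M : Type*} [CommRing R] [AddCommGroup M] [Module R M] {B : LinearMap.BilinForm R M}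

theorem orthogonal_sup (N L : Submodule R M) :
    B.orthogonal (N ⊔ L) = B.orthogonal N ⊓ B.orthogonal L := by
  refine le_antisymm (le_inf (orthogonal_le le_sup_left) (orthogonal_le le_sup_right)) ?_
  rintro x ⟨hxN, hxL⟩ y hy
  obtain ⟨n, hn, l, hl, rfl⟩ := Submodule.mem_sup.mp hy
  simp [hxN n hn, hxL l hl]

end CommRing

variable {K V : Type*} [Field K] [AddCommGroup V] [Module K V] [FiniteDimensional K V]
  {B : LinearMap.BilinForm K V}

theorem orthogonal_inf (hB : B.Nondegenerate) (hB₀ : B.IsRefl) (N L : Submodule K V) :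
    B.orthogonal (N ⊓ L) = B.orthogonal N ⊔ B.orthogonal L := by
  rw [← orthogonal_orthogonal hB hB₀ (_ ⊔ _), orthogonal_sup, orthogonal_orthogonal hB hB₀,
    orthogonal_orthogonal hB hB₀]

theorem inf_orthogonal_inf_sup_orthogonal (hB₀ : B.IsRefl) {W : Submodule K V}
    (hW : Disjoint W (B.orthogonal W)) (L : Submodule K V) :
    W ⊓ B.orthogonal (W ⊓ L) ⊔ B.orthogonal W = B.orthogonal (W ⊓ L) := by
  rw [sup_comm, ← sup_inf_assoc_of_le W (orthogonal_le inf_le_left),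
    ((isCompl_orthogonal_iff_disjoint hB₀).mpr hW).symm.sup_eq_top, top_inf_eq]

theorem forall_orthogonal_iff_forall_inf_orthogonal_inf (hB : B.Nondegenerate) (hB₀ : B.IsRefl)
    {W L : Submodule K V} (hW : Disjoint W (B.orthogonal W)) (hWL : W ⊔ L = ⊤) {P : V → Prop}
    (hP : ∀ x, ∀ n ∈ B.orthogonal W, P x → P (x + n)) :
    (∀ x, x ≠ 0 → x ∈ B.orthogonal L → P x) ↔
      ∀ x, x ≠ 0 → x ∈ W ⊓ B.orthogonal (W ⊓ L) → P x := by
  have hsup : B.orthogonal L ⊔ B.orthogonal W = W ⊓ B.orthogonal (W ⊓ L) ⊔ B.orthogonal W := by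
    rw [inf_orthogonal_inf_sup_orthogonal hB₀ hW, orthogonal_inf hB hB₀, sup_comm]
  have hLW : Disjoint (B.orthogonal L) (B.orthogonal W) := by
    rw [disjoint_iff, ← orthogonal_sup, sup_comm, hWL, orthogonal_top_eq_bot hB]
  exact ⟨Submodule.forall_ne_zero_of_le_sup (le_sup_left.trans hsup.ge)
      (hW.mono_left inf_le_left) hP,
    Submodule.forall_ne_zero_of_le_sup (le_sup_left.trans hsup.le) hLW hP⟩

end LinearMap.BilinForm

open LinearMap.BilinForm in
theorem stmt5_general {g k : Type*} [LieRing g] [LieAlgebra ℝ g] [Module.Finite ℝ g]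
    [LieRing k] [LieAlgebra ℝ k]
    (B : g →ₗ[ℝ] g →ₗ[ℝ] ℝ)
    (hBpos : ∀ x : g, x ≠ 0 → 0 < B x x)
    (hBsymm : ∀ x y : g, B x y = B y x)
    (h l : LieSubalgebra ℝ g)
    (hsum : (h : Submodule ℝ g) ⊔ (l : Submodule ℝ g) = ⊤)
    (V : Submodule ℝ k)
    (br : V →ₗ[ℝ] V →ₗ[ℝ] g)
    (hbr : ∀ Y Z : V, br Y Z ∈ h) :
    -- fatness over A = lᗮ
    ((∀ X : g, X ≠ 0 → (∀ y ∈ l, B X y = 0) →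
        ∀ Y : V, Y ≠ 0 → ∃ Z : V, B X (br Y Z) ≠ 0) ↔
     -- fatness over C = (h ∩ l)ᗮ ⊓ h
     (∀ X : g, X ≠ 0 → X ∈ h → (∀ y : g, y ∈ h → y ∈ l → B X y = 0) →
        ∀ Y : V, Y ≠ 0 → ∃ Z : V, B X (br Y Z) ≠ 0)) := by
  have hB₀ : B.IsRefl := IsSymm.isRefl ⟨hBsymm⟩
  have hB_aniso : ∀ x, B x x = 0 → x = 0 := fun x hx => not_imp_comm.mp (hBpos x) hx.not_gt
  have hB : B.Nondegenerate :=
    hB₀.nondegenerate_iff_separatingLeft.mpr fun x hx => hB_aniso x (hx x)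
  have hh : Disjoint (h : Submodule ℝ g) (orthogonal B h) :=
    Submodule.disjoint_def.mpr fun x hxh hx => hB_aniso x (hx x hxh)
  have hfat_add : ∀ X, ∀ n ∈ orthogonal B h, (∀ Y : V, Y ≠ 0 → ∃ Z : V, B X (br Y Z) ≠ 0) →
      ∀ Y : V, Y ≠ 0 → ∃ Z : V, B (X + n) (br Y Z) ≠ 0 := by
    intro X n hn hX Y hY
    obtain ⟨Z, hZ⟩ := hX Y hY
    refine ⟨Z, ?_⟩
    rwa [map_add, LinearMap.add_apply, hB₀ _ _ (hn _ (hbr Y Z)), add_zero]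
  have hmem : ∀ (N : Submodule ℝ g) (x : g), x ∈ orthogonal B N ↔ ∀ y ∈ N, B x y = 0 :=
    fun N x => forall₂_congr fun y _ => by rw [hBsymm]
  simpa only [hmem, Submodule.mem_inf, and_imp, LieSubalgebra.mem_toSubmodule] using
    forall_orthogonal_iff_forall_inf_orthogonal_inf hB hB₀ hh hsum hfat_add

/-- Lemma 1 of the paper: with `A = lᗮ` and `C = (h ∩ l)ᗮ ∩ h` (orthogonal
complements with respect to a positive-definite invariant bilinear form `B` on `g`),
`g = h + l`, and a bilinear map `br : V × V → h` on a subspace `V` of a Lie algebra `k`,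
the fatness condition over `A` is equivalent to the fatness condition over `C`. -/
theorem stmt5 {g k : Type*} [LieRing g] [LieAlgebra ℝ g] [Module.Finite ℝ g]
    [LieRing k] [LieAlgebra ℝ k]
    (B : g →ₗ[ℝ] g →ₗ[ℝ] ℝ)
    (hBpos : ∀ x : g, x ≠ 0 → 0 < B x x)
    (hBsymm : ∀ x y : g, B x y = B y x)
    (hBinv : ∀ x y z : g, B ⁅x, y⁆ z = B x ⁅y, z⁆)
    (h l : LieSubalgebra ℝ g)
    (hsum : (h : Submodule ℝ g) ⊔ (l : Submodule ℝ g) = ⊤)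
    (V : Submodule ℝ k)
    (br : V →ₗ[ℝ] V →ₗ[ℝ] g)
    (hbr : ∀ Y Z : V, br Y Z ∈ h) :
    -- fatness over A = lᗮ
    ((∀ X : g, X ≠ 0 → (∀ y ∈ l, B X y = 0) →
        ∀ Y : V, Y ≠ 0 → ∃ Z : V, B X (br Y Z) ≠ 0) ↔
     -- fatness over C = (h ∩ l)ᗮ ⊓ h
     (∀ X : g, X ≠ 0 → X ∈ h → (∀ y : g, y ∈ h → y ∈ l → B X y = 0) →
        ∀ Y : V, Y ≠ 0 → ∃ Z : V, B X (br Y Z) ≠ 0)) :=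
  stmt5_general B hBpos hBsymm h l hsum V br hbr
end

section
/- Let G be a compact connected Lie group with Lie algebra g, and H, L closed connected subgroups with Lie algebras h, l. If g = h + l (as vector spaces), then G = H·L, i.e., every element of G is a product of an element of H and an element of L. -/
/-!
Choose `Xᵢ ∈ 𝔥` and `Zⱼ ∈ 𝔩` spanning `span 𝔥` and `span 𝔩`, and a complement `m` of
`span 𝔥 + span 𝔩` in the matrix space. The map `(s, t, Y) ↦ ∏ exp (sᵢ Xᵢ) · ∏ exp (tⱼ Zⱼ) · exp Y`
is a submersion at `0`, so every `x ∈ G` near `1` is `h l exp Y` with `h ∈ H`, `l ∈ L`, `Y ∈ m`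
small and `exp Y ∈ G`. If such `Y ≠ 0` accumulated at `0`, a limit direction of `Y / ‖Y‖` would
lie in `𝔤 ∩ m`, as `G` is closed; but `𝔤 ⊆ span 𝔥 + span 𝔩`. So `Y = 0` and `HL` is a
neighbourhood of `1` in `G`. Translating by `H` and `L`, `HL` is open in `G`; being compact
it is closed, and `G` is connected.
-/

open Matrix

/-- The Lie algebra of a closed subgroup of `GL(n, ℝ)`: all matrices `X` such that the
one-parameter group `t ↦ exp(tX)` lies in the subgroup. -/
def lieAlgebraOf {n : ℕ} (H : Subgroup (GL (Fin n) ℝ)) :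
    Set (Matrix (Fin n) (Fin n) ℝ) :=
  {X | ∀ t : ℝ, ∃ u ∈ H,
    (u : Matrix (Fin n) (Fin n) ℝ) = NormedSpace.exp (t • X)}

open Filter Topology Set NormedSpace
open scoped Pointwise

theorem subset_mul_of_eventually_mem_mul {X : Type*} [Group X] [TopologicalSpace X]
    [IsTopologicalGroup X] {K H L : Subgroup X} (hK : IsPreconnected (K : Set X))
    (hHK : H ≤ K) (hLK : L ≤ K) (hcl : IsClosed ((H : Set X) * (L : Set X)))
    (hloc : ∀ᶠ x in 𝓝 1, x ∈ K → x ∈ (H : Set X) * (L : Set X)) :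
    (K : Set X) ⊆ (H : Set X) * (L : Set X) := by
  set S := (H : Set X) * (L : Set X)
  set O := {y | ∀ᶠ z in 𝓝 y, z ∈ K → z ∈ S}
  have hSO : S ⊆ O := by
    intro y hy
    obtain ⟨a, ha, b, hb, rfl⟩ := Set.mem_mul.mp hy
    have hlim : Tendsto (fun z => a⁻¹ * z * b⁻¹) (𝓝 (a * b)) (𝓝 1) := by
      have : Continuous fun z => a⁻¹ * z * b⁻¹ := by fun_prop
      simpa using this.tendsto (a * b)
    filter_upwards [hlim.eventually hloc] with z hz hzK
    obtain ⟨c, hc, d, hd, hcd⟩ :=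
      Set.mem_mul.mp (hz (K.mul_mem (K.mul_mem (K.inv_mem (hHK ha)) hzK) (K.inv_mem (hLK hb))))
    refine Set.mem_mul.mpr ⟨a * c, H.mul_mem ha hc, d * b, L.mul_mem hd hb, ?_⟩
    rw [mul_assoc, ← mul_assoc c, hcd]
    group
  by_contra hsub
  obtain ⟨x, hxK, hxS⟩ := not_subset.mp hsub
  obtain ⟨y, hyK, hyO, hyS⟩ := hK O Sᶜ isOpen_setOfPred_eventually_nhds hcl.isOpen_compl
    (fun y _ => (em (y ∈ S)).imp (@hSO y) id)
    ⟨1, K.one_mem, hSO (Set.mem_mul.mpr ⟨1, H.one_mem, 1, L.one_mem, one_mul 1⟩)⟩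
    ⟨x, hxK, hxS⟩
  exact hyS (hyO.self_of_nhds hyK)

theorem exists_fin_family_span_eq {K V : Type*} [DivisionRing K] [AddCommGroup V] [Module K V]
    [FiniteDimensional K V] (s : Set V) :
    ∃ (k : ℕ) (W : Fin k → V),
      range W ⊆ s ∧ Submodule.span K (range W) = Submodule.span K s := by
  obtain ⟨b, hbs, hspan, hli⟩ := exists_linearIndependent K s
  obtain ⟨k, W, hW⟩ := hli.set_finite_of_isNoetherian.fin_embedding
  exact ⟨k, W, hW ▸ hbs, hW ▸ hspan⟩

theorem HasStrictFDerivAt.mul_of_eq_one {𝕜 E 𝔸 : Type*} [NontriviallyNormedField 𝕜]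
    [NormedAddCommGroup E] [NormedSpace 𝕜 E] [NormedRing 𝔸] [NormedAlgebra 𝕜 𝔸]
    {a b : E → 𝔸} {a' b' : E →L[𝕜] 𝔸} {x : E} (ha : HasStrictFDerivAt a a' x)
    (hb : HasStrictFDerivAt b b' x) (ha1 : a x = 1) (hb1 : b x = 1) :
    HasStrictFDerivAt (fun y => a y * b y) (a' + b') x := by
  refine (ha.mul' hb).congr_fderiv ?_
  rw [ha1, hb1, MulOpposite.op_one, one_smul, one_smul, add_comm]

section ExpProd

variable {𝔸 : Type*} [NormedRing 𝔸] [NormedAlgebra ℝ 𝔸]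

noncomputable def expProd {k : ℕ} (W : Fin k → 𝔸) (c : Fin k → ℝ) : 𝔸 :=
  (List.ofFn fun i => exp (c i • W i)).prod

theorem expProd_zero {k : ℕ} (W : Fin k → 𝔸) : expProd W 0 = 1 := by
  simp [expProd]

theorem expProd_succ {k : ℕ} (W : Fin (k + 1) → 𝔸) (c : Fin (k + 1) → ℝ) :
    expProd W c = exp (c 0 • W 0) * expProd (Fin.tail W) (Fin.tail c) := by
  simp [expProd, List.ofFn_succ, Fin.tail]

variable [CompleteSpace 𝔸]

theorem hasStrictFDerivAt_exp_comp_zero {E : Type*} [NormedAddCommGroup E] [NormedSpace ℝ E]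
    (L : E →L[ℝ] 𝔸) : HasStrictFDerivAt (fun x => exp (L x)) L 0 := by
  have hexp : HasStrictFDerivAt exp (1 : 𝔸 →L[ℝ] 𝔸) (L 0) := by
    rw [map_zero]
    exact hasStrictFDerivAt_exp_zero
  exact (hexp.comp 0 L.hasStrictFDerivAt).congr_fderiv (ContinuousLinearMap.id_comp L)

theorem hasStrictFDerivAt_expProd {k : ℕ} (W : Fin k → 𝔸) :
    HasStrictFDerivAt (expProd W) (Fintype.linearCombination ℝ W).toContinuousLinearMap 0 := by
  induction k with
  | zero =>
    convert hasStrictFDerivAt_const (1 : 𝔸) (0 : Fin 0 → ℝ) using 1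
    · exact funext fun c => by simp [expProd]
    · ext c; simp [Fintype.linearCombination_apply]
  | succ k ih =>
    let head : (Fin (k + 1) → ℝ) →L[ℝ] 𝔸 :=
      (ContinuousLinearMap.proj (R := ℝ) (φ := fun _ : Fin (k + 1) => ℝ) 0).smulRight (W 0)
    let tail : (Fin (k + 1) → ℝ) →L[ℝ] (Fin k → ℝ) :=
      ContinuousLinearMap.pi fun i => ContinuousLinearMap.proj i.succ
    have hhead := hasStrictFDerivAt_exp_comp_zero head
    have htail := (ih (Fin.tail W)).comp 0 tail.hasStrictFDerivAt
    have hsplit : expProd W = fun c => exp (head c) * expProd (Fin.tail W) (tail c) :=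
      funext (expProd_succ W)
    rw [hsplit]
    refine (hhead.mul_of_eq_one htail (by simp) (by simp [expProd_zero])).congr_fderiv ?_
    ext c
    simp [head, tail, Fintype.linearCombination_apply, Fin.sum_univ_succ, Fin.tail]

noncomputable def expChart {a b : ℕ} (WH : Fin a → 𝔸) (WL : Fin b → 𝔸) (m : Submodule ℝ 𝔸)
    (e : (Fin a → ℝ) × (Fin b → ℝ) × m) : 𝔸 :=
  expProd WH e.1 * (expProd WL e.2.1 * exp (e.2.2 : 𝔸))

theorem map_expChart_nhds_zero {a b : ℕ} (WH : Fin a → 𝔸) (WL : Fin b → 𝔸)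
    (m : Submodule ℝ 𝔸) [CompleteSpace m]
    (hspan : Submodule.span ℝ (range WH) ⊔ Submodule.span ℝ (range WL) ⊔ m = ⊤) :
    map (expChart WH WL m) (𝓝 0) = 𝓝 1 := by
  let fst₃ := ContinuousLinearMap.fst ℝ (Fin a → ℝ) ((Fin b → ℝ) × m)
  let snd₃ := ContinuousLinearMap.snd ℝ (Fin a → ℝ) ((Fin b → ℝ) × m)
  have hH := (hasStrictFDerivAt_expProd WH).comp 0 fst₃.hasStrictFDerivAt
  have hL := (hasStrictFDerivAt_expProd WL).comp 0
    ((ContinuousLinearMap.fst ℝ _ _).comp snd₃).hasStrictFDerivAt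
  have hm := hasStrictFDerivAt_exp_comp_zero
    (m.subtypeL.comp ((ContinuousLinearMap.snd ℝ _ _).comp snd₃))
  have hderiv := hH.mul_of_eq_one (hL.mul_of_eq_one hm (by simp [expProd_zero]) (by simp))
    (by simp [expProd_zero]) (by simp [expProd_zero])
  have hchart0 : expChart WH WL m 0 = 1 := by simp [expChart, expProd_zero]
  rw [← hchart0]
  refine hderiv.map_nhds_eq_of_surj ?_
  rw [eq_top_iff, ← hspan]
  rintro x hx
  obtain ⟨y, hy, z, hz, rfl⟩ := Submodule.mem_sup.mp hx
  obtain ⟨u, hu, v, hv, rfl⟩ := Submodule.mem_sup.mp hy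
  rw [← Fintype.range_linearCombination] at hu hv
  obtain ⟨c, rfl⟩ := hu
  obtain ⟨d, rfl⟩ := hv
  exact ⟨(c, d, ⟨z, hz⟩), by simp [fst₃, snd₃, add_assoc]⟩

end ExpProd

section MatrixGroup

-- `exp` computed through this normed algebra structure agrees with the one in `lieAlgebraOf`
-- only after unfolding instances, hence the occasional closing `rfl`.
attribute [local instance] Matrix.linftyOpNormedRing Matrix.linftyOpNormedAlgebra

variable {n : ℕ} {G : Subgroup (GL (Fin n) ℝ)}

local notation "M" => Matrix (Fin n) (Fin n) ℝ
local notation "GLₙ" => GL (Fin n) ℝ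

theorem exp_neg_mem {X : M} (h : exp X ∈ Units.val '' (G : Set GLₙ)) :
    exp (-X) ∈ Units.val '' (G : Set GLₙ) := by
  obtain ⟨u, hu, hux⟩ := h
  exact ⟨u⁻¹, G.inv_mem hu, by rw [Matrix.coe_units_inv, hux, Matrix.exp_neg]⟩

theorem exp_nsmul_mem {X : M} (h : exp X ∈ Units.val '' (G : Set GLₙ)) (k : ℕ) :
    exp (k • X) ∈ Units.val '' (G : Set GLₙ) := by
  obtain ⟨u, hu, hux⟩ := h
  exact ⟨u ^ k, G.pow_mem hu k, by rw [Units.val_pow_eq_pow_val, hux, Matrix.exp_nsmul]⟩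

theorem expProd_mem {k : ℕ} (W : Fin k → M) (hW : ∀ i, W i ∈ lieAlgebraOf G) (c : Fin k → ℝ) :
    expProd W c ∈ Units.val '' (G : Set GLₙ) := by
  induction k with
  | zero => exact ⟨1, G.one_mem, by simp [expProd]⟩
  | succ k ih =>
    obtain ⟨u, hu, hux⟩ := hW 0 (c 0)
    obtain ⟨v, hv, hvx⟩ := ih (Fin.tail W) (fun i => hW i.succ) (Fin.tail c)
    exact ⟨u * v, G.mul_mem hu hv, by rw [expProd_succ, Units.val_mul, hux, hvx]; rfl⟩

theorem mem_lieAlgebraOf_of_nonneg {X : M}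
    (h : ∀ t : ℝ, 0 ≤ t → exp (t • X) ∈ Units.val '' (G : Set GLₙ)) : X ∈ lieAlgebraOf G := by
  intro t
  rcases le_total 0 t with ht | ht
  · exact h t ht
  · simpa using exp_neg_mem (h (-t) (neg_nonneg.mpr ht))

theorem tendsto_natFloor_div_mul_nhdsGT_zero {t : ℝ} (ht : 0 ≤ t) :
    Tendsto (fun r : ℝ => (⌊t / r⌋₊ : ℝ) * r) (𝓝[>] 0) (𝓝 t) := by
  refine ((tendsto_nat_floor_mul_div_atTop ht).comp tendsto_inv_nhdsGT_zero).congr fun r => ?_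
  simp [div_eq_mul_inv]

theorem mem_lieAlgebraOf_of_tendsto (hG : IsClosed (Units.val '' (G : Set GLₙ)))
    {l : Filter M} [l.NeBot] (hl0 : l ≤ 𝓝 0)
    (hl : ∀ᶠ Y in l, Y ≠ 0 ∧ exp Y ∈ Units.val '' (G : Set GLₙ)) {B : M}
    (hB : Tendsto (fun Y => ‖Y‖⁻¹ • Y) l (𝓝 B)) : B ∈ lieAlgebraOf G := by
  refine mem_lieAlgebraOf_of_nonneg fun t ht => ?_
  have hnorm : Tendsto (fun Y : M => ‖Y‖) l (𝓝[>] 0) :=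
    tendsto_nhdsWithin_iff.mpr
      ⟨tendsto_norm_zero.mono_left hl0, hl.mono fun Y hY => norm_pos_iff.mpr hY.1⟩
  have hmul : Tendsto (fun Y : M => ((⌊t / ‖Y‖⌋₊ : ℝ) * ‖Y‖) • (‖Y‖⁻¹ • Y)) l (𝓝 (t • B)) :=
    ((tendsto_natFloor_div_mul_nhdsGT_zero ht).comp hnorm).smul hB
  -- `exp` of the multiple `⌊t / ‖Y‖⌋ • Y` lies in `G` and tends to `exp (t • B)`
  refine hG.mem_of_tendsto ((exp_continuous.tendsto _).comp hmul) ?_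
  filter_upwards [hl] with Y ⟨hY0, hYG⟩
  have hmultiple : ((⌊t / ‖Y‖⌋₊ : ℝ) * ‖Y‖) • (‖Y‖⁻¹ • Y) = ⌊t / ‖Y‖⌋₊ • Y := by
    rw [smul_smul, mul_assoc, mul_inv_cancel₀ (norm_ne_zero_iff.mpr hY0), mul_one,
      Nat.cast_smul_eq_nsmul]
  rw [Function.comp_apply, hmultiple]
  exact exp_nsmul_mem hYG ⌊t / ‖Y‖⌋₊

theorem eventually_eq_zero_of_exp_mem (hG : IsClosed (Units.val '' (G : Set GLₙ)))
    {m : Submodule ℝ M} (hm : ∀ X ∈ m, X ∈ lieAlgebraOf G → X = 0) :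
    ∀ᶠ Y in 𝓝 (0 : M), Y ∈ m → exp Y ∈ Units.val '' (G : Set GLₙ) → Y = 0 := by
  by_contra h
  set P := {Y : M | Y ∈ m ∧ exp Y ∈ Units.val '' (G : Set GLₙ) ∧ Y ≠ 0}
  have hP : ∃ᶠ Y in 𝓝 (0 : M), Y ∈ P :=
    (not_eventually.mp h).mono fun Y hY => by simp only [Classical.not_imp] at hY; exact hY
  have : (𝓝 (0 : M) ⊓ 𝓟 P).NeBot := frequently_iff_neBot.mp hP
  let U := Ultrafilter.of (𝓝 (0 : M) ⊓ 𝓟 P)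
  have hUP : P ∈ U := Ultrafilter.of_le _ (mem_inf_of_right (mem_principal_self P))
  have hS : IsCompact (Metric.sphere (0 : M) 1 ∩ m) :=
    (isCompact_sphere 0 1).inter_right m.closed_of_finiteDimensional
  have hUS : (U.map fun Y => ‖Y‖⁻¹ • Y : Filter M) ≤ 𝓟 (Metric.sphere 0 1 ∩ m) := by
    rw [Ultrafilter.coe_map, le_principal_iff, mem_map]
    filter_upwards [hUP] with Y ⟨hYm, _, hY0⟩
    exact ⟨by simpa using norm_smul_inv_norm (𝕜 := ℝ) hY0, m.smul_mem _ hYm⟩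
  obtain ⟨B, ⟨hB1, hBm⟩, hB⟩ := hS.ultrafilter_le_nhds _ hUS
  rw [Ultrafilter.coe_map] at hB
  have hBG : B ∈ lieAlgebraOf G :=
    mem_lieAlgebraOf_of_tendsto hG ((Ultrafilter.of_le _).trans inf_le_left)
      (Filter.mem_of_superset hUP fun Y hY => ⟨hY.2.2, hY.2.1⟩) hB
  simp [hm B hBm hBG] at hB1

theorem eventually_mem_mul_nhds_one {H L : Subgroup (GL (Fin n) ℝ)}
    (hG : IsClosed (Units.val '' (G : Set GLₙ))) (hHG : H ≤ G) (hLG : L ≤ G)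
    (hsum : ∀ X ∈ lieAlgebraOf G, ∃ Y ∈ lieAlgebraOf H, ∃ Z ∈ lieAlgebraOf L, X = Y + Z) :
    ∀ᶠ u in 𝓝 (1 : GLₙ), u ∈ G → u ∈ (H : Set GLₙ) * (L : Set GLₙ) := by
  obtain ⟨a, WH, hWH, hspanH⟩ := exists_fin_family_span_eq (K := ℝ) (lieAlgebraOf H)
  obtain ⟨b, WL, hWL, hspanL⟩ := exists_fin_family_span_eq (K := ℝ) (lieAlgebraOf L)
  obtain ⟨m, hm⟩ := Submodule.exists_isCompl
    (Submodule.span ℝ (range WH) ⊔ Submodule.span ℝ (range WL))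
  have hmG : ∀ X ∈ m, X ∈ lieAlgebraOf G → X = 0 := by
    intro X hXm hXG
    obtain ⟨Y, hY, Z, hZ, rfl⟩ := hsum X hXG
    refine Submodule.disjoint_def.mp hm.disjoint _ (Submodule.add_mem_sup ?_ ?_) hXm
    · exact hspanH ▸ Submodule.subset_span hY
    · exact hspanL ▸ Submodule.subset_span hZ
  have hchart :
      ∀ᶠ x in 𝓝 (1 : M), ∀ u ∈ G, (u : M) = x → u ∈ (H : Set GLₙ) * (L : Set GLₙ) := by
    refine (map_expChart_nhds_zero WH WL m hm.sup_eq_top).ge (eventually_map.mpr ?_)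
    have hY : Tendsto (fun e : (Fin a → ℝ) × (Fin b → ℝ) × m => (e.2.2 : M)) (𝓝 0) (𝓝 0) :=
      (continuous_subtype_val.comp (continuous_snd.comp continuous_snd)).tendsto' 0 0 rfl
    filter_upwards [hY.eventually (eventually_eq_zero_of_exp_mem hG hmG)] with e he u hu hue
    obtain ⟨p, hp, hpe⟩ := expProd_mem WH (fun i => hWH (mem_range_self i)) e.1
    obtain ⟨q, hq, hqe⟩ := expProd_mem WL (fun i => hWL (mem_range_self i)) e.2.1
    have hexp : ((q⁻¹ * p⁻¹ * u : GLₙ) : M) = exp (e.2.2 : M) := by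
      rw [Units.val_mul, Units.val_mul, hue, expChart, ← hpe, ← hqe, mul_assoc,
        Units.inv_mul_cancel_left, Units.inv_mul_cancel_left]
      rfl
    have hzero := he e.2.2.2
      ⟨_, G.mul_mem (G.mul_mem (G.inv_mem (hLG hq)) (G.inv_mem (hHG hp))) hu, hexp⟩
    refine Set.mem_mul.mpr ⟨p, hp, q, hq, Units.ext ?_⟩
    rw [hue, expChart, hzero, exp_zero, mul_one, Units.val_mul, hpe, hqe]
  filter_upwards [(Units.continuous_val.tendsto 1).eventually hchart] with u hu huG
  exact hu u huG rfl

end MatrixGroup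

theorem stmt13_general {n : ℕ} (G H L : Subgroup (GL (Fin n) ℝ))
    (hGcpt : IsCompact (G : Set (GL (Fin n) ℝ)))
    (hGconn : IsConnected (G : Set (GL (Fin n) ℝ)))
    (hHG : H ≤ G) (hLG : L ≤ G)
    (hHcl : IsClosed (H : Set (GL (Fin n) ℝ)))
    (hLcl : IsClosed (L : Set (GL (Fin n) ℝ)))
    (hsum : ∀ X ∈ lieAlgebraOf G, ∃ Y ∈ lieAlgebraOf H, ∃ Z ∈ lieAlgebraOf L, X = Y + Z) :
    ∀ x ∈ G, ∃ a ∈ H, ∃ b ∈ L, x = a * b := by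
  have hHL : IsCompact ((H : Set (GL (Fin n) ℝ)) * (L : Set (GL (Fin n) ℝ))) :=
    (hGcpt.of_isClosed_subset hHcl hHG).mul (hGcpt.of_isClosed_subset hLcl hLG)
  have hloc :=
    eventually_mem_mul_nhds_one (hGcpt.image Units.continuous_val).isClosed hHG hLG hsum
  intro x hx
  obtain ⟨a, ha, b, hb, hab⟩ := Set.mem_mul.mp
    (subset_mul_of_eventually_mem_mul hGconn.isPreconnected hHG hLG hHL.isClosed hloc hx)
  exact ⟨a, ha, b, hb, hab.symm⟩

/-- `G` a compact connected (matrix) Lie group, `H`, `L` closed connected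
subgroups with Lie algebras `h`, `l`.  If `g = h + l` as vector spaces, then `G = H·L`. -/
theorem stmt13 {n : ℕ} (G H L : Subgroup (GL (Fin n) ℝ))
    (hGcpt : IsCompact (G : Set (GL (Fin n) ℝ)))
    (hGconn : IsConnected (G : Set (GL (Fin n) ℝ)))
    (hHG : H ≤ G) (hLG : L ≤ G)
    (hHcl : IsClosed (H : Set (GL (Fin n) ℝ)))
    (hHconn : IsConnected (H : Set (GL (Fin n) ℝ)))
    (hLcl : IsClosed (L : Set (GL (Fin n) ℝ)))
    (hLconn : IsConnected (L : Set (GL (Fin n) ℝ)))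
    (hsum : ∀ X ∈ lieAlgebraOf G, ∃ Y ∈ lieAlgebraOf H, ∃ Z ∈ lieAlgebraOf L, X = Y + Z) :
    ∀ x ∈ G, ∃ a ∈ H, ∃ b ∈ L, x = a * b :=
  stmt13_general G H L hGcpt hGconn hHG hLG hHcl hLcl hsum
end
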